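/- If q: R → R' is a finite birational morphism of integral affine schemes corresponding to an injective finite ring map that is an isomorphism on fraction fields but not surjective on rings, then R' is not normal. Applied instance: the image of the map ℂ⁶ → ℂ⁸, (p1,p2,p3,p4,t1,w) ↦ (p1,p2,p3,p4, wp1+w²p2, wp3+w²p4, t1, w³+t1w), is a non-normal affine variety, since w is integral over the coordinate ring of the image (it satisfies w³ + t1·w − t2 = 0) but does not belong to it. -/
import Mathlib


open MvPolynomial

/-- `B = ℂ[p1,p2,p3,p4,t1,w]` with variables `0..3 = p1..p4`, `4 = t1`, `5 = w`, and
`A ⊆ B` the subalgebra generated by `p1, p2, p3, p4, t1, u = wp1+w²p2, v = wp3+w²p4,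
t2 = w³+t1·w` (the coordinate ring of the image of `ℂ⁶ → ℂ⁸`). -/
noncomputable def imgSubalg : Subalgebra ℂ (MvPolynomial (Fin 6) ℂ) :=
  Algebra.adjoin ℂ
    ({X 0, X 1, X 2, X 3, X 4, X 5 * X 0 + X 5 ^ 2 * X 1, X 5 * X 2 + X 5 ^ 2 * X 3,
      X 5 ^ 3 + X 4 * X 5} : Set (MvPolynomial (Fin 6) ℂ))

lemma mem_imgSubalg_of_gen {x : MvPolynomial (Fin 6) ℂ}
    (hx : x ∈ ({X 0, X 1, X 2, X 3, X 4, X 5 * X 0 + X 5 ^ 2 * X 1, X 5 * X 2 + X 5 ^ 2 * X 3,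
      X 5 ^ 3 + X 4 * X 5} : Set (MvPolynomial (Fin 6) ℂ))) : x ∈ imgSubalg :=
  Algebra.subset_adjoin hx

lemma p0_mem : (X 0 : MvPolynomial (Fin 6) ℂ) ∈ imgSubalg :=
  mem_imgSubalg_of_gen (Set.mem_insert _ _)

lemma p1_mem : (X 1 : MvPolynomial (Fin 6) ℂ) ∈ imgSubalg :=
  mem_imgSubalg_of_gen (Set.mem_insert_of_mem _ (Set.mem_insert _ _))

lemma p2_mem : (X 2 : MvPolynomial (Fin 6) ℂ) ∈ imgSubalg :=
  mem_imgSubalg_of_gen (Set.mem_insert_of_mem _ (Set.mem_insert_of_mem _ (Set.mem_insert _ _)))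

lemma p3_mem : (X 3 : MvPolynomial (Fin 6) ℂ) ∈ imgSubalg :=
  mem_imgSubalg_of_gen (Set.mem_insert_of_mem _ (Set.mem_insert_of_mem _
    (Set.mem_insert_of_mem _ (Set.mem_insert _ _))))

lemma t1_mem : (X 4 : MvPolynomial (Fin 6) ℂ) ∈ imgSubalg :=
  mem_imgSubalg_of_gen (Set.mem_insert_of_mem _ (Set.mem_insert_of_mem _
    (Set.mem_insert_of_mem _ (Set.mem_insert_of_mem _ (Set.mem_insert _ _)))))

lemma u_mem : (X 5 * X 0 + X 5 ^ 2 * X 1 : MvPolynomial (Fin 6) ℂ) ∈ imgSubalg :=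
  mem_imgSubalg_of_gen (Set.mem_insert_of_mem _ (Set.mem_insert_of_mem _
    (Set.mem_insert_of_mem _ (Set.mem_insert_of_mem _ (Set.mem_insert_of_mem _
      (Set.mem_insert _ _))))))

lemma v_mem : (X 5 * X 2 + X 5 ^ 2 * X 3 : MvPolynomial (Fin 6) ℂ) ∈ imgSubalg :=
  mem_imgSubalg_of_gen (Set.mem_insert_of_mem _ (Set.mem_insert_of_mem _
    (Set.mem_insert_of_mem _ (Set.mem_insert_of_mem _ (Set.mem_insert_of_mem _
      (Set.mem_insert_of_mem _ (Set.mem_insert _ _)))))))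

lemma t2_mem : (X 5 ^ 3 + X 4 * X 5 : MvPolynomial (Fin 6) ℂ) ∈ imgSubalg :=
  mem_imgSubalg_of_gen (Set.mem_insert_of_mem _ (Set.mem_insert_of_mem _
    (Set.mem_insert_of_mem _ (Set.mem_insert_of_mem _ (Set.mem_insert_of_mem _
      (Set.mem_insert_of_mem _ (Set.mem_insert_of_mem _ rfl)))))))

/-- The evaluation map sending `p1..p4, t1` to `0` and `w` to `X`. -/
noncomputable def phi1 : MvPolynomial (Fin 6) ℂ →ₐ[ℂ] Polynomial ℂ :=
  aeval (fun i => if i = 5 then Polynomial.X else 0)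

lemma phi1_X (i : Fin 6) : phi1 (X i) = if i = 5 then Polynomial.X else 0 := aeval_X _ i

lemma phi1_X0 : phi1 (X 0) = 0 := (phi1_X 0).trans (if_neg (by decide))
lemma phi1_X1 : phi1 (X 1) = 0 := (phi1_X 1).trans (if_neg (by decide))
lemma phi1_X2 : phi1 (X 2) = 0 := (phi1_X 2).trans (if_neg (by decide))
lemma phi1_X3 : phi1 (X 3) = 0 := (phi1_X 3).trans (if_neg (by decide))
lemma phi1_X4 : phi1 (X 4) = 0 := (phi1_X 4).trans (if_neg (by decide))
lemma phi1_X5 : phi1 (X 5) = Polynomial.X := (phi1_X 5).trans (if_pos rfl)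

/-- `w` is integral over `A` (it is a root of `X³ + t1·X − t2`), `w ∉ A`, and `w` lies in
the fraction field of `A`; hence `A` is not integrally closed and the image variety is
not normal. -/
theorem stmt16 :
    IsIntegral imgSubalg (X 5 : MvPolynomial (Fin 6) ℂ) ∧
    (X 5 : MvPolynomial (Fin 6) ℂ) ∉ imgSubalg ∧
    ∃ a b : MvPolynomial (Fin 6) ℂ,
      a ∈ imgSubalg ∧ b ∈ imgSubalg ∧ b ≠ 0 ∧ b * X 5 = a := by
  refine ⟨?_, ?_, ?_⟩
  · -- integrality
    refine ⟨Polynomial.X ^ 3 + (Polynomial.C (⟨X 4, t1_mem⟩ : imgSubalg) * Polynomial.X -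
        Polynomial.C (⟨X 5 ^ 3 + X 4 * X 5, t2_mem⟩ : imgSubalg)), ?_, ?_⟩
    · apply Polynomial.monic_X_pow_add
      calc Polynomial.degree (Polynomial.C (⟨X 4, t1_mem⟩ : imgSubalg) * Polynomial.X -
            Polynomial.C (⟨X 5 ^ 3 + X 4 * X 5, t2_mem⟩ : imgSubalg)) ≤
          max (Polynomial.degree (Polynomial.C (⟨X 4, t1_mem⟩ : imgSubalg) * Polynomial.X))
            (Polynomial.degree (Polynomial.C (⟨X 5 ^ 3 + X 4 * X 5, t2_mem⟩ : imgSubalg))) :=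
          Polynomial.degree_sub_le _ _
        _ ≤ max 1 0 := by
            gcongr
            · exact (Polynomial.degree_C_mul_X_le _)
            · exact Polynomial.degree_C_le
        _ < 3 := by norm_num
    · simp only [Polynomial.eval₂_add, Polynomial.eval₂_sub, Polynomial.eval₂_mul,
        Polynomial.eval₂_pow, Polynomial.eval₂_X, Polynomial.eval₂_C]
      show (X 5 : MvPolynomial (Fin 6) ℂ) ^ 3 + (X 4 * X 5 - (X 5 ^ 3 + X 4 * X 5)) = 0
      ring
  · -- non-membership
    intro hw
    obtain ⟨ζ, hζ⟩ : ∃ ζ : ℂ, ζ ^ 2 + ζ + 1 = 0 := by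
      obtain ⟨ζ, hζ⟩ := IsAlgClosed.exists_root (k := ℂ)
        (Polynomial.X ^ 2 + Polynomial.X + 1)
        (by
          have : (Polynomial.X ^ 2 + Polynomial.X + 1 : Polynomial ℂ).degree = 2 := by
            compute_degree!
          rw [this]; norm_num)
      exact ⟨ζ, by simpa [Polynomial.IsRoot] using hζ⟩
    have hζ3 : ζ ^ 3 = 1 := by linear_combination (ζ - 1) * hζ
    have hζ1 : ζ ≠ 1 := by
      intro h; rw [h] at hζ; norm_num at hζ
    set phi2 : Polynomial ℂ →ₐ[ℂ] Polynomial ℂ :=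
      Polynomial.aeval (Polynomial.C ζ * Polynomial.X) with hphi2
    have hle : imgSubalg ≤ AlgHom.equalizer (phi2.comp phi1) phi1 := by
      apply Algebra.adjoin_le
      intro x hx
      simp only [Set.mem_insert_iff, Set.mem_singleton_iff] at hx
      rw [SetLike.mem_coe]
      rcases hx with h|h|h|h|h|h|h|h <;> subst h <;>
        rw [AlgHom.mem_equalizer, AlgHom.comp_apply] <;>
        simp only [map_add, map_mul, map_pow, phi1_X0, phi1_X1, phi1_X2, phi1_X3, phi1_X4,
          phi1_X5, mul_zero, zero_mul, add_zero, zero_add, map_zero, hphi2,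
          Polynomial.aeval_X, mul_pow, ← Polynomial.C_pow, hζ3, Polynomial.C_1, one_mul]
    have h5 := hle hw
    rw [AlgHom.mem_equalizer, AlgHom.comp_apply, phi1_X5] at h5
    simp only [hphi2, Polynomial.aeval_X] at h5
    have hcoeff : ζ = 1 := by
      have := congrArg (fun p => Polynomial.coeff p 1) h5
      simpa using this
    exact hζ1 hcoeff
  · -- w in fraction field
    refine ⟨(X 5 * X 0 + X 5 ^ 2 * X 1) * X 3 - (X 5 * X 2 + X 5 ^ 2 * X 3) * X 1,
      X 0 * X 3 - X 1 * X 2, ?_, ?_, ?_, by ring⟩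
    · exact sub_mem (mul_mem u_mem p3_mem) (mul_mem v_mem p1_mem)
    · exact sub_mem (mul_mem p0_mem p3_mem) (mul_mem p1_mem p2_mem)
    · intro h
      set ev : MvPolynomial (Fin 6) ℂ →ₐ[ℂ] ℂ :=
        aeval (fun i : Fin 6 => if i = 0 then (1 : ℂ) else if i = 3 then 1 else 0) with hev
      have e0 : ev (X 0) = 1 := (aeval_X _ 0).trans (if_pos rfl)
      have e1 : ev (X 1) = 0 :=
        (aeval_X _ 1).trans ((if_neg (by decide)).trans (if_neg (by decide)))
      have e2 : ev (X 2) = 0 :=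
        (aeval_X _ 2).trans ((if_neg (by decide)).trans (if_neg (by decide)))
      have e3 : ev (X 3) = 1 :=
        (aeval_X _ 3).trans ((if_neg (by decide)).trans (if_pos rfl))
      have h2 := congrArg ev h
      rw [map_sub, map_mul, map_mul, e0, e1, e2, e3, map_zero] at h2
      norm_num at h2
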